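/- For the flat metric G₁₂=v e^{-y₁}y₁, G₁₃=v e^{-y₁}, G₂₂=q e^{-2y₁} (symmetric, other entries zero, q,v≠0), the function Φ(y)=c₀+c₁ξ₁+c₂ξ₂+c₃ξ₃ with ξ as in the 4|1 coordinate change satisfies R_{ij}=∇ᵢ∇ⱼΦ and R=2∇ₖ∇ᵏΦ+∇ₖΦ∇ᵏΦ if and only if v c₂² + 2q c₁c₃ = 0. -/

import Mathlib

open Real Matrix

noncomputable section

/-- Partial derivative of a scalar function on ℝ³ in the i-th coordinate direction. -/
def pd (i : Fin 3) (f : (Fin 3 → ℝ) → ℝ) (y : Fin 3 → ℝ) : ℝ :=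
  fderiv ℝ f y (Pi.single i 1)

/-- Christoffel symbols Γ^k_{ij} of the Levi-Civita connection of the metric g. -/
def christoffel (g : (Fin 3 → ℝ) → Matrix (Fin 3) (Fin 3) ℝ) (k i j : Fin 3)
    (y : Fin 3 → ℝ) : ℝ :=
  (1/2) * ∑ l, (g y)⁻¹ k l *
    (pd i (fun z => g z l j) y + pd j (fun z => g z l i) y - pd l (fun z => g z i j) y)

/-- Riemann curvature tensor R^l_{kij}. -/
def riemann (g : (Fin 3 → ℝ) → Matrix (Fin 3) (Fin 3) ℝ) (l k i j : Fin 3)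
    (y : Fin 3 → ℝ) : ℝ :=
  pd i (christoffel g l j k) y - pd j (christoffel g l i k) y
  + ∑ m, (christoffel g l i m y * christoffel g m j k y
        - christoffel g l j m y * christoffel g m i k y)

/-- Ricci tensor R_{ij} = R^k_{ikj}. -/
def ricci (g : (Fin 3 → ℝ) → Matrix (Fin 3) (Fin 3) ℝ) (i j : Fin 3)
    (y : Fin 3 → ℝ) : ℝ :=
  ∑ k, riemann g k i k j y

/-- Scalar (Gauss) curvature R = g^{ij} R_{ij}. -/
def scalarCurv (g : (Fin 3 → ℝ) → Matrix (Fin 3) (Fin 3) ℝ) (y : Fin 3 → ℝ) : ℝ :=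
  ∑ i, ∑ j, (g y)⁻¹ i j * ricci g i j y

/-- Covariant Hessian ∇ᵢ∇ⱼΦ = ∂ᵢ∂ⱼΦ - Γ^k_{ij} ∂ₖΦ. -/
def covHess (g : (Fin 3 → ℝ) → Matrix (Fin 3) (Fin 3) ℝ) (Φ : (Fin 3 → ℝ) → ℝ)
    (i j : Fin 3) (y : Fin 3 → ℝ) : ℝ :=
  pd i (pd j Φ) y - ∑ k, christoffel g k i j y * pd k Φ y

/-- The (4|1) flat metric. -/
def G41 (q v : ℝ) (y : Fin 3 → ℝ) : Matrix (Fin 3) (Fin 3) ℝ :=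
  !![0, v * exp (-(y 0)) * y 0, v * exp (-(y 0));
     v * exp (-(y 0)) * y 0, q * exp (-2 * y 0), 0;
     v * exp (-(y 0)), 0, 0]


/-- Flat coordinates for the (4|1) metric. -/
def xi41 (q v : ℝ) (y : Fin 3 → ℝ) : Fin 3 → ℝ :=
  ![-exp (-(y 0)),
    v / q * (y 0 + exp (-(y 0))) + exp (-(y 0)) * y 1,
    v / q * (y 0 - Real.sinh (y 0)) + q / (2 * v) * exp (-(y 0)) * (y 1) ^ 2
      + (exp (-(y 0)) + y 0 - 1) * y 1 + y 2]

/-- The dilaton candidate Φ = c₀ + c₁ξ₁ + c₂ξ₂ + c₃ξ₃. -/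
def Phi41 (q v c₀ c₁ c₂ c₃ : ℝ) (y : Fin 3 → ℝ) : ℝ :=
  c₀ + c₁ * xi41 q v y 0 + c₂ * xi41 q v y 1 + c₃ * xi41 q v y 2

set_option maxHeartbeats 1000000

/-! ### Auxiliary machinery -/

def pr (i : Fin 3) : (Fin 3 → ℝ) →L[ℝ] ℝ := ContinuousLinearMap.proj i

lemma pd_form (A B C A' B' C' : ℝ → ℝ) (d : ℝ)
    (hA : ∀ t, HasDerivAt A (A' t) t) (hB : ∀ t, HasDerivAt B (B' t) t)
    (hC : ∀ t, HasDerivAt C (C' t) t) (i : Fin 3) (y : Fin 3 → ℝ) :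
    pd i (fun z => A (z 0) + B (z 0) * z 1 + C (z 0) * z 1 ^ 2 + d * z 2) y =
      (A' (y 0) + B' (y 0) * y 1 + C' (y 0) * y 1 ^ 2) * (Pi.single (0 : Fin 3) (1:ℝ) : Fin 3 → ℝ) i
      + (B (y 0) + 2 * C (y 0) * y 1) * (Pi.single (1 : Fin 3) (1:ℝ) : Fin 3 → ℝ) i
      + d * (Pi.single (2 : Fin 3) (1:ℝ) : Fin 3 → ℝ) i := by
  have e0 : HasFDerivAt (fun z : Fin 3 → ℝ => z 0) (pr 0) y := (pr 0).hasFDerivAt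
  have e1 : HasFDerivAt (fun z : Fin 3 → ℝ => z 1) (pr 1) y := (pr 1).hasFDerivAt
  have e2 : HasFDerivAt (fun z : Fin 3 → ℝ => z 2) (pr 2) y := (pr 2).hasFDerivAt
  have hA2 : HasFDerivAt (fun z : Fin 3 → ℝ => A (z 0)) (A' (y 0) • pr 0) y :=
    (hA (y 0)).comp_hasFDerivAt y e0
  have hB2 : HasFDerivAt (fun z : Fin 3 → ℝ => B (z 0)) (B' (y 0) • pr 0) y :=
    (hB (y 0)).comp_hasFDerivAt y e0
  have hC2 : HasFDerivAt (fun z : Fin 3 → ℝ => C (z 0)) (C' (y 0) • pr 0) y :=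
    (hC (y 0)).comp_hasFDerivAt y e0
  have h := ((hA2.add (hB2.mul e1)).add ((hC2.mul (e1.mul e1)))).add ((e2.const_mul d))
  have hf := h.fderiv
  rw [pd]
  rw [show (fun z : Fin 3 → ℝ => A (z 0) + B (z 0) * z 1 + C (z 0) * z 1 ^ 2 + d * z 2)
      = (fun z : Fin 3 → ℝ => ((A (z 0) + B (z 0) * z 1) + C (z 0) * (z 1 * z 1)) + d * z 2) by
    funext z; ring]
  rw [show (fun z : Fin 3 → ℝ => ((A (z 0) + B (z 0) * z 1) + C (z 0) * (z 1 * z 1)) + d * z 2)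
      = (((fun z : Fin 3 → ℝ => A (z 0)) + (fun z : Fin 3 → ℝ => B (z 0)) * fun z : Fin 3 → ℝ => z 1)
        + (fun z : Fin 3 → ℝ => C (z 0)) * ((fun z : Fin 3 → ℝ => z 1) * fun z : Fin 3 → ℝ => z 1)
        + fun z : Fin 3 → ℝ => d * z 2) from rfl]
  rw [hf]
  simp [ContinuousLinearMap.add_apply, ContinuousLinearMap.smul_apply,
    ContinuousLinearMap.proj_apply, smul_eq_mul, Pi.single_apply]
  fin_cases i <;> simp [pr, Pi.single_apply] <;> ring

lemma pd_t (A A' : ℝ → ℝ) (h : ∀ t, HasDerivAt A (A' t) t) (i : Fin 3) (y : Fin 3 → ℝ) :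
    pd i (fun z => A (z 0)) y = A' (y 0) * (Pi.single (0 : Fin 3) (1:ℝ) : Fin 3 → ℝ) i := by
  have e0 : HasFDerivAt (fun z : Fin 3 → ℝ => z 0) (pr 0) y := (pr 0).hasFDerivAt
  have hA2 : HasFDerivAt (fun z : Fin 3 → ℝ => A (z 0)) (A' (y 0) • pr 0) y :=
    (h (y 0)).comp_hasFDerivAt y e0
  rw [pd, hA2.fderiv]
  simp [pr, Pi.single_apply, eq_comm]

@[simp] lemma pd_const (c : ℝ) (i : Fin 3) (y : Fin 3 → ℝ) : pd i (fun _ => c) y = 0 := by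
  simp [pd]

lemma hd_expneg (t : ℝ) : HasDerivAt (fun s : ℝ => Real.exp (-s)) (-Real.exp (-t)) t := by
  simpa using (hasDerivAt_neg t).exp

@[simp] lemma pd_m1 (v : ℝ) (i : Fin 3) (y : Fin 3 → ℝ) :
    pd i (fun z : Fin 3 → ℝ => v * Real.exp (-z 0) * z 0) y
      = (v * Real.exp (-y 0) - v * Real.exp (-y 0) * y 0) * (Pi.single (0 : Fin 3) (1:ℝ) : Fin 3 → ℝ) i :=
  pd_t (fun t => v * Real.exp (-t) * t) (fun t => v * Real.exp (-t) - v * Real.exp (-t) * t)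
    (fun t => (((hd_expneg t).const_mul v).mul (hasDerivAt_id t)).congr_deriv (by simp only [id_eq]; ring)) i y

@[simp] lemma pd_m2 (v : ℝ) (i : Fin 3) (y : Fin 3 → ℝ) :
    pd i (fun z : Fin 3 → ℝ => v * Real.exp (-z 0)) y
      = (-(v * Real.exp (-y 0))) * (Pi.single (0 : Fin 3) (1:ℝ) : Fin 3 → ℝ) i :=
  pd_t (fun t => v * Real.exp (-t)) (fun t => -(v * Real.exp (-t)))
    (fun t => ((hd_expneg t).const_mul v).congr_deriv (by ring)) i y

@[simp] lemma pd_m3 (q : ℝ) (i : Fin 3) (y : Fin 3 → ℝ) :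
    pd i (fun z : Fin 3 → ℝ => q * Real.exp (-2 * z 0)) y
      = (-(2 * q * Real.exp (-2 * y 0))) * (Pi.single (0 : Fin 3) (1:ℝ) : Fin 3 → ℝ) i :=
  pd_t (fun t => q * Real.exp (-2 * t)) (fun t => -(2 * q * Real.exp (-2 * t)))
    (fun t => ((((hasDerivAt_id t).const_mul (-2)).exp).const_mul q).congr_deriv (by simp only [id_eq]; ring)) i y

@[simp] lemma pd_g1 (v q : ℝ) (i : Fin 3) (y : Fin 3 → ℝ) :
    pd i (fun z : Fin 3 → ℝ => v / q * Real.exp (z 0)) y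
      = (v / q * Real.exp (y 0)) * (Pi.single (0 : Fin 3) (1:ℝ) : Fin 3 → ℝ) i :=
  pd_t (fun t => v / q * Real.exp t) (fun t => v / q * Real.exp t)
    (fun t => ((Real.hasDerivAt_exp t).const_mul (v / q)).congr_deriv (by ring)) i y

@[simp] lemma pd_g2 (v q : ℝ) (i : Fin 3) (y : Fin 3 → ℝ) :
    pd i (fun z : Fin 3 → ℝ => -(v / q * (z 0 * Real.exp (z 0)))) y
      = (-(v / q * (Real.exp (y 0) + y 0 * Real.exp (y 0)))) * (Pi.single (0 : Fin 3) (1:ℝ) : Fin 3 → ℝ) i :=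
  pd_t (fun t => -(v / q * (t * Real.exp t))) (fun t => -(v / q * (Real.exp t + t * Real.exp t)))
    (fun t => ((((hasDerivAt_id t).mul (Real.hasDerivAt_exp t)).const_mul (v / q)).neg).congr_deriv
      (by simp only [id_eq]; ring)) i y

@[simp] lemma pd_g3 (i : Fin 3) (y : Fin 3 → ℝ) :
    pd i (fun z : Fin 3 → ℝ => z 0) y = (1:ℝ) * (Pi.single (0 : Fin 3) (1:ℝ) : Fin 3 → ℝ) i :=
  pd_t (fun t => t) (fun _ => 1) (fun t => hasDerivAt_id t) i y

@[simp] lemma pd_g4 (q v : ℝ) (i : Fin 3) (y : Fin 3 → ℝ) :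
    pd i (fun z : Fin 3 → ℝ => q / v * Real.exp (-z 0)) y
      = (-(q / v * Real.exp (-y 0))) * (Pi.single (0 : Fin 3) (1:ℝ) : Fin 3 → ℝ) i :=
  pd_t (fun t => q / v * Real.exp (-t)) (fun t => -(q / v * Real.exp (-t)))
    (fun t => ((hd_expneg t).const_mul (q / v)).congr_deriv (by ring)) i y

lemma exp2 (t : ℝ) : Real.exp (2 * t) = Real.exp t * Real.exp t := by
  rw [two_mul, Real.exp_add]

/-- Explicit inverse of the metric. -/
def GinvM (q v : ℝ) (y : Fin 3 → ℝ) : Matrix (Fin 3) (Fin 3) ℝ :=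
  !![0, 0, exp (y 0) / v;
     0, exp (y 0) * exp (y 0) / q, -(y 0 * (exp (y 0) * exp (y 0)) / q);
     exp (y 0) / v, -(y 0 * (exp (y 0) * exp (y 0)) / q), y 0 ^ 2 * (exp (y 0) * exp (y 0)) / q]

lemma G41_inv (q v : ℝ) (hq : q ≠ 0) (hv : v ≠ 0) (y : Fin 3 → ℝ) :
    (G41 q v y)⁻¹ = GinvM q v y := by
  refine Matrix.inv_eq_right_inv ?_
  ext i j
  fin_cases i <;> fin_cases j <;>
    simp [G41, GinvM, Matrix.mul_apply, Fin.sum_univ_three, Real.exp_neg, exp2] <;>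
    field_simp <;> ring

/-- Explicit Christoffel symbols. -/
def Gam (q v : ℝ) (k i j : Fin 3) : (Fin 3 → ℝ) → ℝ := fun y =>
  ![![![(-1 : ℝ), 0, 0], ![0, 0, 0], ![0, 0, 0]],
    ![![v / q * Real.exp (y 0), -1, 0], ![-1, 0, 0], ![0, 0, 0]],
    ![![-(v / q * (y 0 * Real.exp (y 0))), y 0, 0], ![y 0, q / v * Real.exp (-y 0), 0],
      ![0, 0, 0]]] k i j

lemma christoffel_eq (q v : ℝ) (hq : q ≠ 0) (hv : v ≠ 0) (k i j : Fin 3) :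
    christoffel (G41 q v) k i j = Gam q v k i j := by
  funext y
  unfold christoffel
  rw [G41_inv q v hq hv y]
  fin_cases k <;> fin_cases i <;> fin_cases j <;>
    simp only [Fin.zero_eta, Fin.mk_one, Fin.reduceFinMk, Fin.isValue,
      Fin.sum_univ_three, G41, GinvM, Gam, Matrix.of_apply,
      Matrix.cons_val_zero, Matrix.cons_val_one, Matrix.cons_val_two,
      Matrix.head_cons, Matrix.tail_cons,
      pd_m1, pd_m2, pd_m3, pd_const, Pi.single_apply, Fin.reduceEq, reduceIte] <;>
    norm_num <;>
    (try simp only [Real.exp_neg, exp2, neg_mul]) <;> (try field_simp) <;> (try ring)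

lemma Gam_def (q v : ℝ) (k i j : Fin 3) : Gam q v k i j = fun y =>
  ![![![(-1 : ℝ), 0, 0], ![0, 0, 0], ![0, 0, 0]],
    ![![v / q * Real.exp (y 0), -1, 0], ![-1, 0, 0], ![0, 0, 0]],
    ![![-(v / q * (y 0 * Real.exp (y 0))), y 0, 0], ![y 0, q / v * Real.exp (-y 0), 0],
      ![0, 0, 0]]] k i j := rfl

lemma ricci_zero (q v : ℝ) (hq : q ≠ 0) (hv : v ≠ 0) (i j : Fin 3) (y : Fin 3 → ℝ) :
    ricci (G41 q v) i j y = 0 := by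
  unfold ricci riemann
  simp only [christoffel_eq q v hq hv, Fin.sum_univ_three]
  fin_cases i <;> fin_cases j <;>
    simp only [Gam_def, Fin.zero_eta, Fin.mk_one, Fin.reduceFinMk, Fin.isValue, Gam, Matrix.cons_val_zero,
      Matrix.cons_val_one, Matrix.cons_val_two, Matrix.head_cons, Matrix.tail_cons,
      pd_g1, pd_g2, pd_g3, pd_g4, pd_const, Pi.single_apply, Fin.reduceEq, reduceIte] <;>
    norm_num <;> (try simp only [Real.exp_neg, exp2, neg_mul]) <;> (try field_simp) <;> (try ring)

lemma Phi_eq (q v c₀ c₁ c₂ c₃ : ℝ) : Phi41 q v c₀ c₁ c₂ c₃ = fun z =>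
    (c₀ + c₁ * -Real.exp (-z 0) + c₂ * (v / q * (z 0 + Real.exp (-z 0)))
      + c₃ * (v / q * (z 0 - Real.sinh (z 0))))
    + (c₂ * Real.exp (-z 0) + c₃ * (Real.exp (-z 0) + z 0 - 1)) * z 1
    + (c₃ * (q / (2 * v)) * Real.exp (-z 0)) * z 1 ^ 2
    + c₃ * z 2 := by
  funext z; simp [Phi41, xi41]; ring

lemma pdPhi (q v c₀ c₁ c₂ c₃ : ℝ) (i : Fin 3) (y : Fin 3 → ℝ) :
    pd i (Phi41 q v c₀ c₁ c₂ c₃) y =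
      (c₁ * Real.exp (-y 0) + c₂ * (v / q * (1 - Real.exp (-y 0)))
          + c₃ * (v / q * (1 - Real.cosh (y 0)))
        + (-(c₂ * Real.exp (-y 0)) + c₃ * (1 - Real.exp (-y 0))) * y 1
        + -(c₃ * (q / (2 * v)) * Real.exp (-y 0)) * y 1 ^ 2) * (Pi.single (0:Fin 3) (1:ℝ) : Fin 3 → ℝ) i
      + ((c₂ * Real.exp (-y 0) + c₃ * (Real.exp (-y 0) + y 0 - 1))
          + 2 * (c₃ * (q / (2 * v)) * Real.exp (-y 0)) * y 1) * (Pi.single (1:Fin 3) (1:ℝ) : Fin 3 → ℝ) i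
      + c₃ * (Pi.single (2:Fin 3) (1:ℝ) : Fin 3 → ℝ) i := by
  rw [Phi_eq]
  exact pd_form
    (fun t => c₀ + c₁ * -Real.exp (-t) + c₂ * (v / q * (t + Real.exp (-t)))
      + c₃ * (v / q * (t - Real.sinh t)))
    (fun t => c₂ * Real.exp (-t) + c₃ * (Real.exp (-t) + t - 1))
    (fun t => c₃ * (q / (2 * v)) * Real.exp (-t))
    (fun t => c₁ * Real.exp (-t) + c₂ * (v / q * (1 - Real.exp (-t)))
      + c₃ * (v / q * (1 - Real.cosh t)))
    (fun t => -(c₂ * Real.exp (-t)) + c₃ * (1 - Real.exp (-t)))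
    (fun t => -(c₃ * (q / (2 * v)) * Real.exp (-t)))
    c₃
    (fun t => ((((hasDerivAt_const t c₀).add (((hd_expneg t).neg).const_mul c₁)).add
        ((((hasDerivAt_id t).add (hd_expneg t)).const_mul (v / q)).const_mul c₂)).add
        ((((hasDerivAt_id t).sub (Real.hasDerivAt_sinh t)).const_mul (v / q)).const_mul c₃)).congr_deriv
      (by ring))
    (fun t => (((hd_expneg t).const_mul c₂).add
        ((((hd_expneg t).add (hasDerivAt_id t)).sub_const 1).const_mul c₃)).congr_deriv
      (by ring))
    (fun t => ((hd_expneg t).const_mul (c₃ * (q / (2 * v)))).congr_deriv (by ring))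
    i y

lemma pdPhi0_fun (q v c₀ c₁ c₂ c₃ : ℝ) : pd 0 (Phi41 q v c₀ c₁ c₂ c₃) = fun y =>
    (c₁ * Real.exp (-y 0) + c₂ * (v / q * (1 - Real.exp (-y 0)))
      + c₃ * (v / q * (1 - Real.cosh (y 0))))
    + (-(c₂ * Real.exp (-y 0)) + c₃ * (1 - Real.exp (-y 0))) * y 1
    + -(c₃ * (q / (2 * v)) * Real.exp (-y 0)) * y 1 ^ 2
    + 0 * y 2 := by
  funext y; rw [pdPhi]; simp [Pi.single_apply]

lemma pdPhi1_fun (q v c₀ c₁ c₂ c₃ : ℝ) : pd 1 (Phi41 q v c₀ c₁ c₂ c₃) = fun y =>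
    (c₂ * Real.exp (-y 0) + c₃ * (Real.exp (-y 0) + y 0 - 1))
    + (2 * (c₃ * (q / (2 * v)) * Real.exp (-y 0))) * y 1
    + 0 * y 1 ^ 2 + 0 * y 2 := by
  funext y; rw [pdPhi]; simp [Pi.single_apply]

lemma pdPhi2_fun (q v c₀ c₁ c₂ c₃ : ℝ) : pd 2 (Phi41 q v c₀ c₁ c₂ c₃) = fun _ => c₃ := by
  funext y; rw [pdPhi]; simp [Pi.single_apply]

lemma pd_P0 (q v c₁ c₂ c₃ : ℝ) (i : Fin 3) (y : Fin 3 → ℝ) :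
    pd i (fun y : Fin 3 → ℝ =>
      (c₁ * Real.exp (-y 0) + c₂ * (v / q * (1 - Real.exp (-y 0)))
        + c₃ * (v / q * (1 - Real.cosh (y 0))))
      + (-(c₂ * Real.exp (-y 0)) + c₃ * (1 - Real.exp (-y 0))) * y 1
      + -(c₃ * (q / (2 * v)) * Real.exp (-y 0)) * y 1 ^ 2
      + 0 * y 2) y =
    (-(c₁ * Real.exp (-y 0)) + c₂ * (v / q * Real.exp (-y 0))
        + c₃ * (v / q * -Real.sinh (y 0))
      + (c₂ * Real.exp (-y 0) + c₃ * Real.exp (-y 0)) * y 1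
      + (c₃ * (q / (2 * v)) * Real.exp (-y 0)) * y 1 ^ 2) * (Pi.single (0:Fin 3) (1:ℝ) : Fin 3 → ℝ) i
    + ((-(c₂ * Real.exp (-y 0)) + c₃ * (1 - Real.exp (-y 0)))
        + 2 * (-(c₃ * (q / (2 * v)) * Real.exp (-y 0))) * y 1) * (Pi.single (1:Fin 3) (1:ℝ) : Fin 3 → ℝ) i
    + 0 * (Pi.single (2:Fin 3) (1:ℝ) : Fin 3 → ℝ) i :=
  pd_form
    (fun t => c₁ * Real.exp (-t) + c₂ * (v / q * (1 - Real.exp (-t)))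
      + c₃ * (v / q * (1 - Real.cosh t)))
    (fun t => -(c₂ * Real.exp (-t)) + c₃ * (1 - Real.exp (-t)))
    (fun t => -(c₃ * (q / (2 * v)) * Real.exp (-t)))
    (fun t => -(c₁ * Real.exp (-t)) + c₂ * (v / q * Real.exp (-t))
      + c₃ * (v / q * -Real.sinh t))
    (fun t => c₂ * Real.exp (-t) + c₃ * Real.exp (-t))
    (fun t => c₃ * (q / (2 * v)) * Real.exp (-t))
    0
    (fun t => ((((hd_expneg t).const_mul c₁).add
        ((((hasDerivAt_const t 1).sub (hd_expneg t)).const_mul (v / q)).const_mul c₂)).add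
        ((((hasDerivAt_const t 1).sub (Real.hasDerivAt_cosh t)).const_mul (v / q)).const_mul c₃)).congr_deriv
      (by ring))
    (fun t => ((((hd_expneg t).const_mul c₂).neg).add
        ((((hasDerivAt_const t 1).sub (hd_expneg t)).const_mul c₃))).congr_deriv (by ring))
    (fun t => (((hd_expneg t).const_mul (c₃ * (q / (2 * v)))).neg).congr_deriv (by ring))
    i y

lemma pd_P1 (q v c₂ c₃ : ℝ) (i : Fin 3) (y : Fin 3 → ℝ) :
    pd i (fun y : Fin 3 → ℝ =>
      (c₂ * Real.exp (-y 0) + c₃ * (Real.exp (-y 0) + y 0 - 1))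
      + (2 * (c₃ * (q / (2 * v)) * Real.exp (-y 0))) * y 1
      + 0 * y 1 ^ 2 + 0 * y 2) y =
    ((-(c₂ * Real.exp (-y 0)) + c₃ * (1 - Real.exp (-y 0)))
      + (-(2 * (c₃ * (q / (2 * v)) * Real.exp (-y 0)))) * y 1
      + 0 * y 1 ^ 2) * (Pi.single (0:Fin 3) (1:ℝ) : Fin 3 → ℝ) i
    + ((2 * (c₃ * (q / (2 * v)) * Real.exp (-y 0))) + 2 * 0 * y 1) * (Pi.single (1:Fin 3) (1:ℝ) : Fin 3 → ℝ) i
    + 0 * (Pi.single (2:Fin 3) (1:ℝ) : Fin 3 → ℝ) i :=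
  pd_form
    (fun t => c₂ * Real.exp (-t) + c₃ * (Real.exp (-t) + t - 1))
    (fun t => 2 * (c₃ * (q / (2 * v)) * Real.exp (-t)))
    (fun _ => 0)
    (fun t => -(c₂ * Real.exp (-t)) + c₃ * (1 - Real.exp (-t)))
    (fun t => -(2 * (c₃ * (q / (2 * v)) * Real.exp (-t))))
    (fun _ => 0)
    0
    (fun t => (((hd_expneg t).const_mul c₂).add
        ((((hd_expneg t).add (hasDerivAt_id t)).sub_const 1).const_mul c₃)).congr_deriv
      (by ring))
    (fun t => (((hd_expneg t).const_mul (c₃ * (q / (2 * v)))).const_mul 2).congr_deriv (by ring))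
    (fun t => hasDerivAt_const t 0)
    i y

lemma covHess_zero (q v c₀ c₁ c₂ c₃ : ℝ) (hq : q ≠ 0) (hv : v ≠ 0) (i j : Fin 3)
    (y : Fin 3 → ℝ) : covHess (G41 q v) (Phi41 q v c₀ c₁ c₂ c₃) i j y = 0 := by
  unfold covHess
  simp only [christoffel_eq q v hq hv, Fin.sum_univ_three]
  fin_cases i <;> fin_cases j <;>
    simp only [Fin.zero_eta, Fin.mk_one, Fin.reduceFinMk, Fin.isValue,
      pdPhi0_fun, pdPhi1_fun, pdPhi2_fun, pd_P0, pd_P1, pd_const,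
      Gam_def, Matrix.cons_val_zero, Matrix.cons_val_one, Matrix.cons_val_two,
      Matrix.head_cons, Matrix.tail_cons,
      Pi.single_apply, Fin.reduceEq, reduceIte] <;>
    (try simp only [Real.exp_neg, exp2, neg_mul, Real.sinh_eq, Real.cosh_eq]) <;>
    (try norm_num) <;> (try field_simp) <;> (try ring)

lemma scalar_zero (q v : ℝ) (hq : q ≠ 0) (hv : v ≠ 0) (y : Fin 3 → ℝ) :
    scalarCurv (G41 q v) y = 0 := by
  unfold scalarCurv
  simp [ricci_zero q v hq hv]

lemma gradsq (q v c₀ c₁ c₂ c₃ : ℝ) (hq : q ≠ 0) (hv : v ≠ 0) (y : Fin 3 → ℝ) :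
    ∑ k, ∑ l, (G41 q v y)⁻¹ k l * pd k (Phi41 q v c₀ c₁ c₂ c₃) y
        * pd l (Phi41 q v c₀ c₁ c₂ c₃) y
      = (v * c₂ ^ 2 + 2 * q * c₁ * c₃) / (q * v) := by
  rw [G41_inv q v hq hv y]
  simp only [Fin.sum_univ_three, pdPhi, GinvM, Matrix.of_apply,
    Matrix.cons_val_zero, Matrix.cons_val_one, Matrix.cons_val_two,
    Matrix.head_cons, Matrix.tail_cons, Pi.single_apply, Fin.reduceEq, reduceIte]
  simp only [Real.exp_neg, Real.sinh_eq, Real.cosh_eq, exp2, neg_mul]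
  norm_num
  field_simp
  ring

theorem stmt_12 (q v c₀ c₁ c₂ c₃ : ℝ) (hq : q ≠ 0) (hv : v ≠ 0) :
    ((∀ (i j : Fin 3) (y : Fin 3 → ℝ),
        ricci (G41 q v) i j y = covHess (G41 q v) (Phi41 q v c₀ c₁ c₂ c₃) i j y) ∧
     (∀ y : Fin 3 → ℝ,
        scalarCurv (G41 q v) y =
          2 * ∑ k, ∑ l, (G41 q v y)⁻¹ k l * covHess (G41 q v) (Phi41 q v c₀ c₁ c₂ c₃) k l y
          + ∑ k, ∑ l, (G41 q v y)⁻¹ k l * pd k (Phi41 q v c₀ c₁ c₂ c₃) y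
              * pd l (Phi41 q v c₀ c₁ c₂ c₃) y))
    ↔ v * c₂ ^ 2 + 2 * q * c₁ * c₃ = 0 := by
  constructor
  · rintro ⟨-, h2⟩
    have h := h2 0
    rw [scalar_zero q v hq hv] at h
    simp only [covHess_zero q v c₀ c₁ c₂ c₃ hq hv, mul_zero, Finset.sum_const_zero,
      zero_add] at h
    rw [gradsq q v c₀ c₁ c₂ c₃ hq hv] at h
    field_simp at h
    linarith
  · intro h
    refine ⟨fun i j y => by
        rw [ricci_zero q v hq hv, covHess_zero q v c₀ c₁ c₂ c₃ hq hv], fun y => ?_⟩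
    rw [scalar_zero q v hq hv]
    simp only [covHess_zero q v c₀ c₁ c₂ c₃ hq hv, mul_zero, Finset.sum_const_zero, zero_add]
    rw [gradsq q v c₀ c₁ c₂ c₃ hq hv, h]
    simp
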